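/- Let mu be a binary sequence with mu <= sigma^j(mu) <= alpha for all j >= 0 and suppose additionally sigma^j(mu) > mu strictly for all j >= 1, where alpha satisfies sigma^j(alpha) <= alpha for all j >= 0. Let n_1 < n_2 < ... be the indices from the lexicographic lemma (so mu_1...mu_{n_j - k} < mu_{k+1}...mu_{n_j} for all 1 <= k < n_j). Then the periodic sequences mu^{n_j} := (mu_1...mu_{n_j})^infty satisfy mu^{n_j} < mu^{n_{j+1}} < mu lexicographically, mu^{n_j} converges to mu, and mu^{n_j} <= sigma^i(mu^{n_j}) < alpha for all i >= 0. -/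

import Mathlib

/-- The one-sided left shift on binary sequences. -/
def shift (x : ℕ → Bool) : ℕ → Bool := fun n => x (n + 1)

/-- Strict lexicographic order on binary sequences (`false < true`). -/
def lexLt (x y : ℕ → Bool) : Prop :=
  ∃ k : ℕ, (∀ i < k, x i = y i) ∧ x k < y k

/-- Non-strict lexicographic order on binary sequences. -/
def lexLe (x y : ℕ → Bool) : Prop := lexLt x y ∨ x = y

/-!
The periodic sequence `x^m = (x₀ … x_{m-1})^∞` lies below `x` whenever `x` is minimal in its shift
orbit: at the first place `k` where they differ, the shift of `x` by the multiple `m ⌊k/m⌋` of the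
period agrees with `x` up to `k % m`, so minimality forces `x (k % m) ≤ x k`. If `x` is not
`m`-periodic this is strict. When the prefix `x₀ … x_{m'-1}` is smaller than each of its proper
suffixes (of the same length), `x^m` with `m < m'` already differs from `x` before `m'`, which
gives `x^m < x^{m'}`; for `x₀ … x_{m-1}` the same property says that every shift of `x^m` is at
least `x^m`. Finally a shift `x_r … x_{m-1} x^m` of `x^m` is below `α`: either `x_r x_{r+1} …`
already drops below `α` within its first `m - r` letters, or `α` continues with
`σ^{m-r} α ≥ x > x^m`.
-/

open Function

section Lex

variable {x y z x' y' : ℕ → Bool}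

theorem shift_iterate_apply (x : ℕ → Bool) (i t : ℕ) : shift^[i] x t = x (t + i) := by
  induction i generalizing x with
  | zero => rfl
  | succ i ih => rw [iterate_succ_apply, ih]; rfl

theorem lexLt_iff_toLex_lt : lexLt x y ↔ toLex x < toLex y := Iff.rfl

theorem lexLe_iff_toLex_le : lexLe x y ↔ toLex x ≤ toLex y := by
  rw [le_iff_lt_or_eq, lexLe, toLex_inj]; rfl

theorem lexLt_irrefl (x : ℕ → Bool) : ¬ lexLt x x := by
  rw [lexLt_iff_toLex_lt]; exact lt_irrefl _

theorem lexLt.trans_lexLe (h₁ : lexLt x y) (h₂ : lexLe y z) : lexLt x z := by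
  rw [lexLt_iff_toLex_lt] at *; rw [lexLe_iff_toLex_le] at h₂; exact h₁.trans_le h₂

theorem lexLt_of_lexLe_of_ne (h : lexLe x y) (hne : x ≠ y) : lexLt x y :=
  h.resolve_right hne

theorem lexLe.apply_le {k : ℕ} (h : lexLe x y) (hk : ∀ i < k, x i = y i) : x k ≤ y k := by
  by_contra! hlt
  rw [lexLe_iff_toLex_le] at h
  exact h.not_gt ⟨k, fun i hi => (hk i hi).symm, hlt⟩

theorem lexLe_of_forall_apply_le (h : ∀ k, (∀ i < k, x i = y i) → x k ≤ y k) : lexLe x y := by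
  rw [lexLe_iff_toLex_le, ← not_lt]
  rintro ⟨k, hk, hlt⟩
  exact (h k fun i hi => (hk i hi).symm).not_gt hlt

theorem lexLt.congr_of_not_eqOn {L : ℕ} (h : lexLt x y) (hxy : ¬ ∀ i < L, x i = y i)
    (hx : ∀ i < L, x i = x' i) (hy : ∀ i < L, y i = y' i) : lexLt x' y' := by
  obtain ⟨k, hk, hlt⟩ := h
  have hkL : k < L := by
    by_contra! hLk
    exact hxy fun i hi => hk i (hi.trans_le hLk)
  refine ⟨k, fun i hi => ?_, ?_⟩
  · rw [← hx i (hi.trans hkL), ← hy i (hi.trans hkL), hk i hi]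
  · rwa [← hx k hkL, ← hy k hkL]

theorem lexLt_of_eqOn_of_shift_lt {L : ℕ} (hxy : ∀ i < L, x i = y i)
    (h : lexLt (shift^[L] x) (shift^[L] y)) : lexLt x y := by
  obtain ⟨k, hk, hlt⟩ := h
  simp only [shift_iterate_apply] at hk hlt
  refine ⟨k + L, fun i hi => ?_, hlt⟩
  rcases lt_or_ge i L with hiL | hLi
  · exact hxy i hiL
  · simpa [Nat.sub_add_cancel hLi] using hk (i - L) (by omega)

theorem lexLt_of_eqOn_of_lexLe_of_shift_lt {L : ℕ} (hx : ∀ i < L, z i = x i) (hzy : lexLe z y)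
    (h : lexLt (shift^[L] x) (shift^[L] y)) : lexLt x y := by
  by_cases hzyL : ∀ i < L, z i = y i
  · exact lexLt_of_eqOn_of_shift_lt (fun i hi => (hx i hi).symm.trans (hzyL i hi)) h
  · have hne : z ≠ y := by rintro rfl; exact hzyL fun _ _ => rfl
    exact (lexLt_of_lexLe_of_ne hzy hne).congr_of_not_eqOn hzyL hx fun _ _ => rfl

end Lex

section Periodize

/-- The periodic sequence `(x₀ … x_{m-1})^∞`; for `m = 0` it is `x` itself. -/
def periodize (m : ℕ) (x : ℕ → Bool) : ℕ → Bool := fun i => x (i % m)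

/-- The paper's condition `x₁ … x_{m-k} < x_{k+1} … x_m` for `1 ≤ k < m`, with 0-based indices. -/
def PrefixLtSuffixes (x : ℕ → Bool) (m : ℕ) : Prop :=
  ∀ k, 1 ≤ k → k < m → ∃ t < m - k, (∀ s < t, x s = x (k + s)) ∧ x t < x (k + t)

variable {x y : ℕ → Bool} {m m' : ℕ}

theorem periodize_apply_of_lt {i : ℕ} (h : i < m) : periodize m x i = x i := by
  rw [periodize, Nat.mod_eq_of_lt h]

theorem shift_iterate_periodize (m i : ℕ) :
    shift^[i] (periodize m x) = shift^[i % m] (periodize m x) := by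
  funext t
  simp only [shift_iterate_apply, periodize, Nat.add_mod t i, Nat.add_mod t (i % m), Nat.mod_mod]

theorem lexLe_periodize (hmin : ∀ j, lexLe x (shift^[j] x)) (m : ℕ) : lexLe (periodize m x) x := by
  refine lexLe_of_forall_apply_le fun k hk => ?_
  have hk' : k % m + m * (k / m) = k := Nat.mod_add_div k m
  have hagree : ∀ s < k % m, x s = shift^[m * (k / m)] x s := fun s hs => by
    rw [shift_iterate_apply, ← hk (s + m * (k / m)) (by omega), ← hk s (by omega), periodize,
      periodize, Nat.add_mul_mod_self_left]
  simpa only [periodize, shift_iterate_apply, hk'] using (hmin (m * (k / m))).apply_le hagree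

theorem lexLt_periodize (hmin : ∀ j, lexLe x (shift^[j] x)) (hstrict : lexLt x (shift^[m] x)) :
    lexLt (periodize m x) x := by
  refine lexLt_of_lexLe_of_ne (lexLe_periodize hmin m) fun hper => lexLt_irrefl x ?_
  have hshift : shift^[m] (periodize m x) = periodize m x := by
    rw [shift_iterate_periodize, Nat.mod_self]; rfl
  rw [hper] at hshift
  rwa [hshift] at hstrict

theorem periodize_lexLe_shift_iterate (hm : 0 < m) (hw : PrefixLtSuffixes x m) (i : ℕ) :
    lexLe (periodize m x) (shift^[i] (periodize m x)) := by
  rw [shift_iterate_periodize]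
  have hr : i % m < m := Nat.mod_lt i hm
  rcases Nat.eq_zero_or_pos (i % m) with h0 | hpos
  · rw [h0]; exact Or.inr rfl
  obtain ⟨t, ht, hagree, hlt⟩ := hw (i % m) hpos hr
  refine Or.inl ⟨t, fun s hs => ?_, ?_⟩
  · rw [shift_iterate_apply, periodize_apply_of_lt (by omega), periodize_apply_of_lt (by omega),
      add_comm, hagree s hs]
  · rwa [shift_iterate_apply, periodize_apply_of_lt (by omega), periodize_apply_of_lt (by omega),
      add_comm]

theorem not_forall_periodize_eq (hm : 0 < m) (hmm' : m < m') (hw : PrefixLtSuffixes x m') :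
    ¬ ∀ i < m', periodize m x i = x i := by
  intro hper
  obtain ⟨t, ht, -, hlt⟩ := hw m hm hmm'
  have hperiod : x (m + t) = x t := by
    rw [← hper (m + t) (by omega), ← hper t (by omega), periodize, periodize, Nat.add_mod_left]
  exact (hperiod ▸ hlt).false

theorem periodize_lt_periodize (hlt : lexLt (periodize m x) x) (hm : 0 < m) (hmm' : m < m')
    (hw : PrefixLtSuffixes x m') : lexLt (periodize m x) (periodize m' x) :=
  hlt.congr_of_not_eqOn (not_forall_periodize_eq hm hmm' hw) (fun _ _ => rfl)
    fun _ hi => (periodize_apply_of_lt hi).symm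

theorem shift_iterate_periodize_lt (hm : 0 < m) (hlt : lexLt (periodize m x) x)
    (hle : ∀ r, lexLe (shift^[r] x) y) (hge : ∀ r, lexLe x (shift^[r] y)) (i : ℕ) :
    lexLt (shift^[i] (periodize m x)) y := by
  rw [shift_iterate_periodize]
  have hr : i % m < m := Nat.mod_lt i hm
  refine lexLt_of_eqOn_of_lexLe_of_shift_lt (L := m - i % m) (fun s hs => ?_) (hle (i % m)) ?_
  · rw [shift_iterate_apply, shift_iterate_apply, periodize_apply_of_lt (by omega)]
  · rw [← iterate_add_apply, Nat.sub_add_cancel hr.le, shift_iterate_periodize, Nat.mod_self]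
    exact hlt.trans_lexLe (hge _)

end Periodize

theorem stmt10_general (mu alpha : ℕ → Bool)
    (hV : ∀ j : ℕ, (lexLe mu (shift^[j] mu) ∧ lexLe (shift^[j] mu) alpha) ∧
      (lexLe mu (shift^[j] alpha) ∧ lexLe (shift^[j] alpha) alpha))
    (hstrict : ∀ j, 1 ≤ j → lexLt mu (shift^[j] mu))
    (n : ℕ → ℕ) (hn1 : 1 ≤ n 0) (hmono : StrictMono n)
    (hword : ∀ j, ∀ k, 1 ≤ k → k < n j →
      ∃ t < n j - k, (∀ s < t, mu s = mu (k + s)) ∧ mu t < mu (k + t)) :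
    (∀ j, lexLt (fun i => mu (i % n j)) (fun i => mu (i % n (j + 1)))) ∧
    (∀ j, lexLt (fun i => mu (i % n j)) mu) ∧
    (∀ N : ℕ, ∃ J, ∀ j ≥ J, ∀ i < N, mu (i % n j) = mu i) ∧
    (∀ j, ∀ i : ℕ,
      lexLe (fun t => mu (t % n j)) (shift^[i] (fun t => mu (t % n j))) ∧
      lexLt (shift^[i] (fun t => mu (t % n j))) alpha) := by
  have hmin : ∀ j, lexLe mu (shift^[j] mu) := fun j => (hV j).1.1
  have hpos : ∀ j, 0 < n j := fun j => hn1.trans (hmono.monotone j.zero_le)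
  have hlt : ∀ j, lexLt (periodize (n j) mu) mu := fun j =>
    lexLt_periodize hmin (hstrict _ (hpos j))
  refine ⟨fun j => periodize_lt_periodize (hlt j) (hpos j) (hmono j.lt_succ_self) (hword (j + 1)),
    hlt, fun N => ⟨N, fun j hj i hi => ?_⟩, fun j i =>
    ⟨periodize_lexLe_shift_iterate (hpos j) (hword j) i,
      shift_iterate_periodize_lt (hpos j) (hlt j) (fun r => (hV r).1.2) (fun r => (hV r).2.1) i⟩⟩
  exact congrArg mu (Nat.mod_eq_of_lt (hi.trans_le (hj.trans (hmono.id_le j))))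

/-- Lemma on approximating `mu` from below by the periodic sequences
`mu^{n_j} = (mu_1…mu_{n_j})^∞`. -/
theorem stmt10 (mu alpha : ℕ → Bool) (h0 : mu 0 = false) (ha0 : alpha 0 = true)
    (hV : ∀ j : ℕ, (lexLe mu (shift^[j] mu) ∧ lexLe (shift^[j] mu) alpha) ∧
      (lexLe mu (shift^[j] alpha) ∧ lexLe (shift^[j] alpha) alpha))
    (hstrict : ∀ j, 1 ≤ j → lexLt mu (shift^[j] mu))
    (n : ℕ → ℕ) (hn1 : 1 ≤ n 0) (hmono : StrictMono n)
    (hword : ∀ j, ∀ k, 1 ≤ k → k < n j →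
      ∃ t < n j - k, (∀ s < t, mu s = mu (k + s)) ∧ mu t < mu (k + t)) :
    (∀ j, lexLt (fun i => mu (i % n j)) (fun i => mu (i % n (j + 1)))) ∧
    (∀ j, lexLt (fun i => mu (i % n j)) mu) ∧
    (∀ N : ℕ, ∃ J, ∀ j ≥ J, ∀ i < N, mu (i % n j) = mu i) ∧
    (∀ j, ∀ i : ℕ,
      lexLe (fun t => mu (t % n j)) (shift^[i] (fun t => mu (t % n j))) ∧
      lexLt (shift^[i] (fun t => mu (t % n j))) alpha) :=
  stmt10_general mu alpha hV hstrict n hn1 hmono hword
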